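/- arXiv:1602.01116 — 2 statements merged into one kernel-verified Lean document; each statement's English description precedes it below -/
import Mathlib

section
/- For a weighted sequence X, a threshold 1/z, and a fixed position i, the number of distinct right-maximal solid factors of X starting at position i is at most z, where a right-maximal solid factor is a solid factor P at position i such that no extension Ps (s ∈ Σ) is a solid factor at position i. -/
open scoped Classical

def matchProb {A : Type*} (p : ℕ → A → ℝ) : ℕ → List A → ℝ
  | _, [] => 1
  | i, a :: t => p i a * matchProb p (i + 1) t

/-- `P` is a solid factor of the weighted sequence (of length `n`, probabilities `p`,
threshold `1/z`) starting at (1-based) position `i`. -/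
def SolidAt {A : Type*} (n : ℕ) (z : ℝ) (p : ℕ → A → ℝ) (i : ℕ) (P : List A) : Prop :=
  1 ≤ i ∧ i + P.length ≤ n + 1 ∧ 1 / z ≤ matchProb p i P

/-- `P` is a right-maximal solid factor at position `i`: it is solid and no one-letter
extension is solid (this includes the case that `P` ends at position `n`). -/
def RightMaximalAt {A : Type*} (n : ℕ) (z : ℝ) (p : ℕ → A → ℝ) (i : ℕ) (P : List A) : Prop :=
  SolidAt n z p i P ∧ ∀ s : A, ¬ SolidAt n z p i (P ++ [s])

lemma matchProb_nonneg {A : Type*} (p : ℕ → A → ℝ) (hp0 : ∀ j a, 0 ≤ p j a) :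
    ∀ (P : List A) (i : ℕ), 0 ≤ matchProb p i P
  | [], _ => by simp [matchProb]
  | a :: t, i => mul_nonneg (hp0 i a) (matchProb_nonneg p hp0 t (i+1))

lemma matchProb_le_one {A : Type*} [Fintype A] (p : ℕ → A → ℝ)
    (hp0 : ∀ j a, 0 ≤ p j a) (hp1 : ∀ j, ∑ a, p j a = 1) :
    ∀ (P : List A) (i : ℕ), matchProb p i P ≤ 1
  | [], _ => by simp [matchProb]
  | a :: t, i => by
    have hle : p i a ≤ 1 := by
      have := Finset.single_le_sum (f := fun a => p i a) (fun b _ => hp0 i b)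
        (Finset.mem_univ a)
      simpa [hp1 i] using this
    calc matchProb p i (a :: t) = p i a * matchProb p (i+1) t := rfl
      _ ≤ 1 * 1 := mul_le_mul hle (matchProb_le_one p hp0 hp1 t (i+1))
          (matchProb_nonneg p hp0 t (i+1)) one_pos.le
      _ = 1 := by ring

lemma matchProb_append {A : Type*} (p : ℕ → A → ℝ) :
    ∀ (L1 : List A) (i : ℕ) (L2 : List A),
      matchProb p i (L1 ++ L2) = matchProb p i L1 * matchProb p (i + L1.length) L2
  | [], i, L2 => by simp [matchProb]
  | a :: t, i, L2 => by
    simp only [List.cons_append, matchProb, List.length_cons, List.append_eq]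
    rw [matchProb_append p t (i+1) L2,
      show i + 1 + t.length = i + (t.length + 1) from by omega]
    ring

/-- Kraft-type inequality: the total match probability of a prefix-free finite set
of strings is at most 1. -/
lemma kraft {A : Type*} [Fintype A] (p : ℕ → A → ℝ)
    (hp0 : ∀ j a, 0 ≤ p j a) (hp1 : ∀ j, ∑ a, p j a = 1) :
    ∀ (N : ℕ) (i : ℕ) (S : Finset (List A)),
      (∀ P ∈ S, P.length ≤ N) →
      (∀ P ∈ S, ∀ Q ∈ S, P <+: Q → P = Q) →
      ∑ P ∈ S, matchProb p i P ≤ 1 := by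
  intro N
  induction N with
  | zero =>
    intro i S hlen _
    have : S ⊆ {([] : List A)} := by
      intro P hP
      have := hlen P hP
      simp only [Nat.le_zero, List.length_eq_zero_iff] at this
      simp [this]
    calc ∑ P ∈ S, matchProb p i P ≤ ∑ P ∈ ({([] : List A)} : Finset (List A)), matchProb p i P :=
          Finset.sum_le_sum_of_subset_of_nonneg this
            (fun P _ _ => matchProb_nonneg p hp0 P i)
      _ = 1 := by simp [matchProb]
  | succ N ih =>
    intro i S hlen hpf
    by_cases hnil : ([] : List A) ∈ S
    · -- S = {[]}
      have hS1 : S = {([] : List A)} := by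
        apply Finset.eq_singleton_iff_unique_mem.mpr
        refine ⟨hnil, fun Q hQ => ?_⟩
        exact (hpf [] hnil Q hQ (List.nil_prefix)).symm
      simp [hS1, matchProb]
    · -- partition by first letter
      have key : ∑ P ∈ S, matchProb p i P
          = ∑ o : Option A, ∑ P ∈ S.filter (fun P => P.head? = o), matchProb p i P := by
        rw [← Finset.sum_fiberwise_of_maps_to (g := fun P : List A => P.head?)
          (fun P _ => Finset.mem_univ _)]
      rw [key, Fintype.sum_option]
      have hnone : S.filter (fun P => P.head? = (none : Option A)) = ∅ := by
        apply Finset.filter_eq_empty_iff.mpr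
        intro P hP h
        cases P with
        | nil => exact hnil hP
        | cons a t => simp at h
      rw [hnone]
      simp only [Finset.sum_empty, zero_add]
      have hbound : ∀ a : A, ∑ P ∈ S.filter (fun P => P.head? = some a), matchProb p i P
          ≤ p i a := by
        intro a
        set F := S.filter (fun P => P.head? = some a) with hF
        have hmem : ∀ P ∈ F, P = a :: P.tail := by
          intro P hP
          rw [hF, Finset.mem_filter] at hP
          cases P with
          | nil => simp at hP
          | cons b t =>
            obtain ⟨_, h⟩ := hP
            simp at h
            simp [h]
        have hinj : Set.InjOn List.tail (F : Set (List A)) := by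
          intro P hP Q hQ h
          rw [hmem P hP, hmem Q hQ, h]
        have hsum : ∑ t ∈ F.image List.tail, (p i a * matchProb p (i+1) t)
            = ∑ P ∈ F, matchProb p i P := by
          rw [Finset.sum_image (fun x hx y hy h => hinj hx hy h)]
          apply Finset.sum_congr rfl
          intro P hP
          conv_rhs => rw [hmem P hP]
          rfl
        rw [← hsum, ← Finset.mul_sum]
        have hih : ∑ t ∈ F.image List.tail, matchProb p (i+1) t ≤ 1 := by
          apply ih (i+1)
          · intro t ht
            obtain ⟨P, hP, rfl⟩ := Finset.mem_image.mp ht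
            have h1 : P ∈ S := (Finset.mem_filter.mp hP).1
            have hl := hlen P h1
            have ht : P.tail.length = P.length - 1 := by
              cases P <;> simp
            omega
          · intro t1 ht1 t2 ht2 hpre
            obtain ⟨P1, hP1, rfl⟩ := Finset.mem_image.mp ht1
            obtain ⟨P2, hP2, rfl⟩ := Finset.mem_image.mp ht2
            have e1 := hmem P1 hP1
            have e2 := hmem P2 hP2
            obtain ⟨r, hr⟩ := hpre
            have hP12 : P1 <+: P2 := by
              refine ⟨r, ?_⟩
              rw [e1, e2]
              simp [hr]
            exact congrArg List.tail
              (hpf P1 (Finset.mem_filter.mp hP1).1 P2 (Finset.mem_filter.mp hP2).1 hP12)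
        calc p i a * ∑ t ∈ F.image List.tail, matchProb p (i+1) t
            ≤ p i a * 1 := mul_le_mul_of_nonneg_left hih (hp0 i a)
          _ = p i a := mul_one _
      calc ∑ a : A, ∑ P ∈ S.filter (fun P => P.head? = some a), matchProb p i P
          ≤ ∑ a : A, p i a := Finset.sum_le_sum (fun a _ => hbound a)
        _ = 1 := hp1 i

/-- At any fixed position `i`, a weighted sequence has at most `z` distinct
right-maximal solid factors. -/
theorem stmt1 {A : Type*} [Fintype A] (n : ℕ) (z : ℝ) (hz : 1 ≤ z)
    (p : ℕ → A → ℝ) (hp0 : ∀ j a, 0 ≤ p j a) (hp1 : ∀ j, ∑ a, p j a = 1)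
    (i : ℕ) (S : Finset (List A)) (hS : ∀ P ∈ S, RightMaximalAt n z p i P) :
    (S.card : ℝ) ≤ z := by
  have hzpos : (0:ℝ) < z := lt_of_lt_of_le one_pos hz
  -- S is prefix-free
  have hpf : ∀ P ∈ S, ∀ Q ∈ S, P <+: Q → P = Q := by
    intro P hP Q hQ hpre
    by_contra hne
    -- Q = P ++ [s] ++ rest for some s
    obtain ⟨R, hR⟩ := hpre
    have hRne : R ≠ [] := by
      rintro rfl; exact hne (by simpa using hR)
    obtain ⟨s, R', rfl⟩ := List.exists_cons_of_ne_nil hRne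
    have hQsolid := (hS Q hQ).1
    obtain ⟨hi1, hilen, hiprob⟩ := hQsolid
    apply (hS P hP).2 s
    refine ⟨hi1, ?_, ?_⟩
    · have : (P ++ [s]).length ≤ Q.length := by
        rw [← hR]; simp
      omega
    · -- matchProb of prefix ≥ matchProb of whole
      have : matchProb p i Q ≤ matchProb p i (P ++ [s]) := by
        rw [← hR, show P ++ s :: R' = (P ++ [s]) ++ R' by simp, matchProb_append]
        calc matchProb p i (P ++ [s]) * matchProb p (i + (P ++ [s]).length) R'
            ≤ matchProb p i (P ++ [s]) * 1 := mul_le_mul_of_nonneg_left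
              (matchProb_le_one p hp0 hp1 _ _) (matchProb_nonneg p hp0 _ _)
          _ = _ := mul_one _
      exact le_trans hiprob this
  have hkraft : ∑ P ∈ S, matchProb p i P ≤ 1 := by
    classical
    obtain ⟨N, hN⟩ : ∃ N, ∀ P ∈ S, P.length ≤ N := by
      refine ⟨(S.sup (fun P => P.length)), fun P hP => Finset.le_sup hP⟩
    exact kraft p hp0 hp1 N i S hN hpf
  have hlower : (S.card : ℝ) * (1 / z) ≤ ∑ P ∈ S, matchProb p i P := by
    have := Finset.card_nsmul_le_sum S (fun P => matchProb p i P) (1 / z)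
      (fun P hP => (hS P hP).1.2.2)
    simpa [nsmul_eq_mul] using this
  have h2 : (S.card : ℝ) / z ≤ 1 := by
    rw [div_eq_mul_one_div]
    exact le_trans hlower hkraft
  exact (div_le_one hzpos).mp h2
end

section
/- For a finite set A with {1, n+1} ⊆ A ⊆ {1,…,n+1} and an integer m ≥ 1, the intervals [a, a+m−1] for a ∈ A \ {n+1} cover {1,…,n} if and only if maxgap(A) ≤ m, where maxgap(A) is the maximum difference between consecutive elements of A in sorted order. -/
open scoped Classical

/-- `maxgap A` is the maximum difference between consecutive elements of `A` in sorted
order (and `0` if `A` has fewer than two elements). -/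
def maxgap (A : Finset ℕ) : ℕ :=
  (A ×ˢ A).sup fun q =>
    if q.1 < q.2 ∧ ∀ c ∈ A, ¬(q.1 < c ∧ c < q.2) then q.2 - q.1 else 0

/-- For `{1, n+1} ⊆ A ⊆ {1, …, n+1}` and `m ≥ 1`, the intervals `[a, a+m-1]` for
`a ∈ A \ {n+1}` cover `{1, …, n}` iff `maxgap A ≤ m`. -/
theorem stmt19 (n m : ℕ) (hm : 1 ≤ m) (A : Finset ℕ)
    (h1 : 1 ∈ A) (h2 : n + 1 ∈ A) (hsub : A ⊆ Finset.Icc 1 (n + 1)) :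
    (∀ q, 1 ≤ q → q ≤ n → ∃ a ∈ A, a ≤ n ∧ a ≤ q ∧ q ≤ a + m - 1) ↔
      maxgap A ≤ m := by
  constructor
  · intro hcov
    refine Finset.sup_le ?_
    rintro ⟨a, b⟩ hab
    simp only [Finset.mem_product] at hab
    split_ifs with h
    · obtain ⟨hlt, hno⟩ := h
      have hb2 : 2 ≤ b := by
        have := hsub hab.1
        simp only [Finset.mem_Icc] at this
        omega
      have hbn : b ≤ n + 1 := by
        have := hsub hab.2
        simp only [Finset.mem_Icc] at this
        omega
      obtain ⟨a', ha', han, haq, hq⟩ := hcov (b - 1) (by omega) (by omega)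
      have hle : a' ≤ a := by
        by_contra hc
        exact hno a' ha' ⟨by omega, by omega⟩
      omega
    · exact Nat.zero_le m
  · intro hmax q hq1 hqn
    set S := A.filter (fun x => x ≤ q) with hSdef
    have hSne : S.Nonempty := ⟨1, by simp [hSdef, h1, hq1]⟩
    set a := S.max' hSne with hadef
    have haA : a ∈ A := (Finset.mem_filter.1 (S.max'_mem hSne)).1
    have haq : a ≤ q := (Finset.mem_filter.1 (S.max'_mem hSne)).2
    set T := A.filter (fun x => q < x) with hTdef
    have hTne : T.Nonempty := ⟨n + 1, by simp [hTdef, h2]; omega⟩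
    set b := T.min' hTne with hbdef
    have hbA : b ∈ A := (Finset.mem_filter.1 (T.min'_mem hTne)).1
    have hqb : q < b := (Finset.mem_filter.1 (T.min'_mem hTne)).2
    have hcond : a < b ∧ ∀ c ∈ A, ¬(a < c ∧ c < b) := by
      refine ⟨by omega, ?_⟩
      rintro c hc ⟨h1c, h2c⟩
      rcases le_or_gt c q with h | h
      · have : c ≤ a := S.le_max' c (by simp [hSdef, hc, h])
        omega
      · have : b ≤ c := T.min'_le c (by simp [hTdef, hc, h])
        omega
    have hgap : b - a ≤ maxgap A := by
      have hle := Finset.le_sup (s := A ×ˢ A)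
        (f := fun q : ℕ × ℕ =>
          if q.1 < q.2 ∧ ∀ c ∈ A, ¬(q.1 < c ∧ c < q.2) then q.2 - q.1 else 0)
        (show (a, b) ∈ A ×ˢ A from Finset.mem_product.2 ⟨haA, hbA⟩)
      simpa only [maxgap, if_pos hcond] using hle
    have haA' := hsub haA
    simp only [Finset.mem_Icc] at haA'
    exact ⟨a, haA, by omega, haq, by omega⟩
end
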